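/- arXiv:2201.11992 — 3 statements merged into one kernel-verified Lean document; each statement's English description precedes it below -/
import Mathlib

section
/- Let K be a convex body of volume 1 in ℝⁿ and let μ_K be the uniform (Lebesgue) probability measure on K. Then ∫_K φ_{μ_K}(x) dx ≥ e^{−cn}, where c > 0 is an absolute constant. -/
open MeasureTheory Real Filter
open scoped ENNReal Pointwise RealInnerProductSpace

noncomputable section

/-- The collection of closed half-spaces of `ℝⁿ` containing the point `x`. -/
def HalfSpacesAt {n : ℕ} (x : EuclideanSpace ℝ (Fin n)) : Set (Set (EuclideanSpace ℝ (Fin n))) :=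
  {H | ∃ (v : EuclideanSpace ℝ (Fin n)) (a : ℝ), v ≠ 0 ∧ H = {z | a ≤ ⟪v, z⟫} ∧ x ∈ H}

/-- Tukey's half-space depth: `φ_μ(x) = inf {μ(H) : H a closed half-space containing x}`. -/
def halfSpaceDepth {n : ℕ} (μ : Measure (EuclideanSpace ℝ (Fin n)))
    (x : EuclideanSpace ℝ (Fin n)) : ℝ≥0∞ :=
  ⨅ H ∈ HalfSpacesAt x, μ H

/-- A measure `μ` is log-concave: `μ(λA + (1-λ)B) ≥ μ(A)^λ μ(B)^(1-λ)` for compact `A, B`. -/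
def IsLogConcaveMeasure {n : ℕ} (μ : Measure (EuclideanSpace ℝ (Fin n))) : Prop :=
  ∀ A B : Set (EuclideanSpace ℝ (Fin n)), IsCompact A → IsCompact B →
    ∀ l : ℝ, 0 < l → l < 1 → μ A ^ l * μ B ^ (1 - l) ≤ μ (l • A + (1 - l) • B)

/-- Non-degenerate: every affine hyperplane has measure `< 1`. -/
def IsNonDegenerate {n : ℕ} (μ : Measure (EuclideanSpace ℝ (Fin n))) : Prop :=
  ∀ (v : EuclideanSpace ℝ (Fin n)) (a : ℝ), v ≠ 0 → μ {z | ⟪v, z⟫ = a} < 1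

/-- The covariance matrix of a measure `μ` on `ℝⁿ`. -/
def covMatrix {n : ℕ} (μ : Measure (EuclideanSpace ℝ (Fin n))) : Matrix (Fin n) (Fin n) ℝ :=
  Matrix.of fun i j => (∫ x, x i * x j ∂μ) - (∫ x, x i ∂μ) * (∫ x, x j ∂μ)

/-- A measure is centered if `∫ ⟨ξ, x⟩ dμ(x) = 0` for all `ξ`. -/
def IsCentered {n : ℕ} (μ : Measure (EuclideanSpace ℝ (Fin n))) : Prop :=
  ∀ ξ : EuclideanSpace ℝ (Fin n), ∫ x, ⟪ξ, x⟫ ∂μ = 0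

/-- A measure is isotropic if it is centered and its covariance matrix is the identity. -/
def IsIsotropic {n : ℕ} (μ : Measure (EuclideanSpace ℝ (Fin n))) : Prop :=
  IsCentered μ ∧ covMatrix μ = 1

/-- The isotropic constant `L_μ = ‖f‖_∞^(1/n) · (det Cov μ)^(1/(2n))` of a measure `μ`
with density `f`. -/
def isoConst (n : ℕ) (f : EuclideanSpace ℝ (Fin n) → ℝ)
    (μ : Measure (EuclideanSpace ℝ (Fin n))) : ℝ :=
  (essSup f volume) ^ ((1 : ℝ)/n) * (covMatrix μ).det ^ ((1 : ℝ)/(2*n))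

/-- The logarithmic Laplace transform `Λ_μ(u) = ln ∫ e^⟨u,x⟩ dμ(x)` (with values in `EReal`). -/
def logLaplace {n : ℕ} (μ : Measure (EuclideanSpace ℝ (Fin n)))
    (u : EuclideanSpace ℝ (Fin n)) : EReal :=
  ENNReal.log (∫⁻ x, ENNReal.ofReal (Real.exp ⟪u, x⟫) ∂μ)

/-- The Cramér transform `Λ*_μ(x) = sup_u (⟨x,u⟩ − Λ_μ(u))`. -/
def cramer {n : ℕ} (μ : Measure (EuclideanSpace ℝ (Fin n)))
    (x : EuclideanSpace ℝ (Fin n)) : EReal :=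
  ⨆ u : EuclideanSpace ℝ (Fin n), ((⟪x, u⟫ : ℝ) : EReal) - logLaplace μ u

/-- `B_t(μ) = {x : Λ*_μ(x) ≤ t}`. -/
def Bset {n : ℕ} (μ : Measure (EuclideanSpace ℝ (Fin n))) (t : ℝ) :
    Set (EuclideanSpace ℝ (Fin n)) :=
  {x | cramer μ x ≤ (t : EReal)}

/-- The one-sided `L_t`-centroid body `Z_t⁺(μ)`, described via its support function
`h(y) = (∫ ⟨y,z⟩₊^t dμ(z))^(1/t)`. -/
def Zplus {n : ℕ} (μ : Measure (EuclideanSpace ℝ (Fin n))) (t : ℝ) :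
    Set (EuclideanSpace ℝ (Fin n)) :=
  {x | ∀ y : EuclideanSpace ℝ (Fin n),
    ⟪y, x⟫ ≤ (∫ z, (max ⟪y, z⟫ 0) ^ t ∂μ) ^ (1/t)}

/-- The `L_t`-centroid body `Z_t(μ) = {x : |⟨v,x⟩|^t ≤ ∫ |⟨v,y⟩|^t dμ(y) for all v}`. -/
def Zbody {n : ℕ} (μ : Measure (EuclideanSpace ℝ (Fin n))) (t : ℝ) :
    Set (EuclideanSpace ℝ (Fin n)) :=
  {x | ∀ v : EuclideanSpace ℝ (Fin n), |⟪v, x⟫| ^ t ≤ ∫ y, |⟪v, y⟫| ^ t ∂μ}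

/-- `μ` is `α`-regular. -/
def IsRegularMeasure {n : ℕ} (μ : Measure (EuclideanSpace ℝ (Fin n))) (α : ℝ) : Prop :=
  ∀ s t : ℝ, 2 ≤ t → t ≤ s → ∀ v : EuclideanSpace ℝ (Fin n),
    (∫ x, |⟪v, x⟫| ^ s ∂μ) ^ (1/s) ≤ α * (s / t) * (∫ x, |⟪v, x⟫| ^ t ∂μ) ^ (1/t)

/-- Ball's body `K_t(f)`, the star body with radial function
`ρ(x) = ((1/f(0)) ∫₀^∞ t r^(t-1) f(rx) dr)^(1/t)`. -/
def BallBody {n : ℕ} (f : EuclideanSpace ℝ (Fin n) → ℝ) (t : ℝ) :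
    Set (EuclideanSpace ℝ (Fin n)) :=
  {x | f 0 / t ≤ ∫ r in Set.Ioi (0 : ℝ), r ^ (t - 1) * f (r • x)}

/-- `R_t(μ) = {x : f_μ(x) ≥ e^{-t} f_μ(0)}`. -/
def Rset {n : ℕ} (f : EuclideanSpace ℝ (Fin n) → ℝ) (t : ℝ) :
    Set (EuclideanSpace ℝ (Fin n)) :=
  {x | Real.exp (-t) * f 0 ≤ f x}

/-!
For `x ∈ ℝⁿ` the set `K ∩ (2x - K)` is invariant under the point reflection `z ↦ 2x - z`,
which preserves volume and swaps the two sides of any hyperplane through `x`; so every closed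
half-space containing `x` carries at least half of its volume: `φ(x) ≥ |K ∩ (2x - K)| / 2`.
By Fubini on the pairs `(x, z)` with `z, 2x - z ∈ K` (where `x` is the midpoint of two points
of `K`, hence lies in `K` by convexity), `∫_K |K ∩ (2x - K)| dx = 2⁻ⁿ |K|² = 2⁻ⁿ`. Thus the
expected depth is at least `2^{-(n+1)} ≥ e^{-2n}`.
-/

variable {E : Type*}

theorem Convex.mem_of_two_smul_sub_mem [AddCommGroup E] [Module ℝ E] {K : Set E}
    (hK : Convex ℝ K) {x z : E} (hz : z ∈ K) (hz' : (2 : ℝ) • x - z ∈ K) : x ∈ K := by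
  convert hK hz hz' (by norm_num : (0 : ℝ) ≤ 1 / 2) (by norm_num : (0 : ℝ) ≤ 1 / 2)
    (by norm_num) using 1
  module

section NormedSpace

open Module

variable [NormedAddCommGroup E] [NormedSpace ℝ E] [FiniteDimensional ℝ E]
  [MeasurableSpace E] [BorelSpace E] (μ : Measure E) [μ.IsAddHaarMeasure]

theorem measure_preimage_two_smul_sub (z : E) (K : Set E) :
    μ ((fun x => (2 : ℝ) • x - z) ⁻¹' K) = (2 ^ finrank ℝ E)⁻¹ * μ K := by
  have hscale : ENNReal.ofReal |((2 : ℝ) ^ finrank ℝ E)⁻¹| = (2 ^ finrank ℝ E)⁻¹ := by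
    rw [abs_of_pos (by positivity), ENNReal.ofReal_inv_of_pos (by positivity),
      ENNReal.ofReal_pow zero_le_two, ENNReal.ofReal_ofNat]
  have hcomp :
      (fun x => (2 : ℝ) • x - z) ⁻¹' K = (fun x => (2 : ℝ) • x) ⁻¹' ((· + -z) ⁻¹' K) := by
    ext; simp [sub_eq_add_neg]
  rw [hcomp, Measure.addHaar_preimage_smul μ two_ne_zero, measure_preimage_add_right, hscale]

theorem Convex.lintegral_measure_inter_reflect {K : Set E} (hconv : Convex ℝ K)
    (hK : MeasurableSet K) :
    ∫⁻ x in K, μ (K ∩ {z | (2 : ℝ) • x - z ∈ K}) ∂μ = (2 ^ finrank ℝ E)⁻¹ * μ K ^ 2 := by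
  set T : Set (E × E) := {p | p.2 ∈ K ∧ (2 : ℝ) • p.1 - p.2 ∈ K}
  have hT : MeasurableSet T :=
    (hK.preimage measurable_snd).inter (hK.preimage (by fun_prop))
  have hsupp : (fun x => μ (Prod.mk x ⁻¹' T)).support ⊆ K := by
    intro x hx
    obtain ⟨z, hz, hz'⟩ := nonempty_of_measure_ne_zero hx
    exact hconv.mem_of_two_smul_sub_mem hz hz'
  have hsection (z : E) : μ ((fun x => (x, z)) ⁻¹' T) =
      K.indicator (fun _ => (2 ^ finrank ℝ E)⁻¹ * μ K) z := by
    by_cases hz : z ∈ K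
    · simp [T, hz, ← measure_preimage_two_smul_sub μ z K, Set.preimage]
    · simp [T, hz]
  calc ∫⁻ x in K, μ (Prod.mk x ⁻¹' T) ∂μ
      = μ.prod μ T := by rw [setLIntegral_eq_of_support_subset hsupp, Measure.prod_apply hT]
    _ = ∫⁻ z, K.indicator (fun _ => (2 ^ finrank ℝ E)⁻¹ * μ K) z ∂μ := by
        simp_rw [Measure.prod_apply_symm hT, hsection]
    _ = (2 ^ finrank ℝ E)⁻¹ * μ K ^ 2 := by
        rw [lintegral_indicator_const hK, mul_assoc, sq]

end NormedSpace

section InnerProductSpace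

variable [NormedAddCommGroup E] [InnerProductSpace ℝ E] [FiniteDimensional ℝ E]
  [MeasurableSpace E] [BorelSpace E] (μ : Measure E) [μ.IsAddHaarMeasure]

theorem measure_le_two_mul_measure_inter_halfSpace {S : Set E} {x : E}
    (hS : ∀ z ∈ S, (2 : ℝ) • x - z ∈ S) (v : E) :
    μ S ≤ 2 * μ (S ∩ {z | ⟪v, x⟫ ≤ ⟪v, z⟫}) := by
  set P : Set E := {z | ⟪v, x⟫ ≤ ⟪v, z⟫}
  have hreflect : S \ P ⊆ (fun z => (2 : ℝ) • x - z) ⁻¹' (S ∩ P) := by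
    rintro z ⟨hz, hzP⟩
    refine ⟨hS z hz, ?_⟩
    simp only [P, Set.mem_ofPred_eq, not_le, inner_sub_right, inner_smul_right] at hzP ⊢
    linarith
  calc μ S ≤ μ (S ∩ P) + μ (S \ P) := measure_le_inter_add_sdiff μ S P
    _ ≤ μ (S ∩ P) + μ ((fun z => (2 : ℝ) • x - z) ⁻¹' (S ∩ P)) := by gcongr
    _ = μ (S ∩ P) + μ (S ∩ P) := by
        congr 1
        exact (Measure.measurePreserving_sub_left μ ((2 : ℝ) • x)).measure_preimage_equiv
          (f := MeasurableEquiv.subLeft _) _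
    _ = 2 * μ (S ∩ P) := (two_mul _).symm

end InnerProductSpace

theorem measure_inter_reflect_div_two_le_halfSpaceDepth {n : ℕ}
    (K : Set (EuclideanSpace ℝ (Fin n))) (x : EuclideanSpace ℝ (Fin n)) :
    volume (K ∩ {z | (2 : ℝ) • x - z ∈ K}) / 2 ≤ halfSpaceDepth (volume.restrict K) x := by
  refine le_iInf₂ fun H hH => ?_
  obtain ⟨v, a, -, rfl, hxH⟩ := hH
  rw [Measure.restrict_apply (measurableSet_le measurable_const (by fun_prop))]
  refine ENNReal.div_le_of_le_mul' <|
    (measure_le_two_mul_measure_inter_halfSpace volume (x := x) ?_ v).trans ?_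
  · rintro z ⟨hz, hz'⟩
    exact ⟨hz', by simpa using hz⟩
  · gcongr 2 * volume ?_
    rintro z ⟨⟨hzK, -⟩, hz⟩
    exact ⟨show a ≤ _ from le_trans hxH hz, hzK⟩

theorem halfSpaceDepth_fin_zero (μ : Measure (EuclideanSpace ℝ (Fin 0)))
    (x : EuclideanSpace ℝ (Fin 0)) : halfSpaceDepth μ x = ⊤ := by
  have : HalfSpacesAt x = ∅ :=
    Set.eq_empty_of_forall_notMem fun _ ⟨v, _, hv, _⟩ => hv (Subsingleton.elim v 0)
  simp [halfSpaceDepth, this]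

theorem ofReal_exp_neg_two_mul_le {n : ℕ} (hn : 1 ≤ n) :
    ENNReal.ofReal (exp (-(2 * n))) ≤ (2 ^ n)⁻¹ / 2 := by
  have hpow : (2 : ℝ) ^ (n + 1) ≤ exp (2 * n) :=
    calc (2 : ℝ) ^ (n + 1) ≤ exp 1 ^ (n + 1) := by
          gcongr; linarith [add_one_le_exp (1 : ℝ)]
      _ = exp (n + 1) := by rw [← exp_nat_mul]; push_cast; ring_nf
      _ ≤ exp (2 * n) := by gcongr; exact_mod_cast (by omega : n + 1 ≤ 2 * n)
  calc ENNReal.ofReal (exp (-(2 * n))) ≤ ENNReal.ofReal (((2 : ℝ) ^ (n + 1))⁻¹) := by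
        rw [exp_neg]; gcongr
    _ = (2 ^ n)⁻¹ / 2 := by
        rw [ENNReal.ofReal_inv_of_pos (by positivity), ENNReal.ofReal_pow zero_le_two,
          ENNReal.ofReal_ofNat, pow_succ, ENNReal.mul_inv (by simp) (by simp), div_eq_mul_inv]

/-- lower bound for the expected depth of the uniform measure on a convex body. -/
theorem expected_depth_lower_bound_convex_body :
    ∃ c : ℝ, 0 < c ∧ ∀ (n : ℕ) (K : Set (EuclideanSpace ℝ (Fin n))),
      IsCompact K → Convex ℝ K → (interior K).Nonempty → volume K = 1 →
      ENNReal.ofReal (Real.exp (-(c * n))) ≤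
        ∫⁻ x in K, halfSpaceDepth (volume.restrict K) x := by
  refine ⟨2, two_pos, fun n K hKc hKconv _ hKvol => ?_⟩
  rcases Nat.eq_zero_or_pos n with rfl | hn
  · simp [halfSpaceDepth_fin_zero, hKvol]
  calc ENNReal.ofReal (exp (-(2 * n))) ≤ (2 ^ n)⁻¹ / 2 := ofReal_exp_neg_two_mul_le hn
    _ = (∫⁻ x in K, volume (K ∩ {z | (2 : ℝ) • x - z ∈ K})) / 2 := by
        rw [hKconv.lintegral_measure_inter_reflect volume hKc.measurableSet, hKvol,
          finrank_euclideanSpace_fin, one_pow, mul_one]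
    _ = ∫⁻ x in K, volume (K ∩ {z | (2 : ℝ) • x - z ∈ K}) / 2 := by
        simp_rw [div_eq_mul_inv]
        exact (lintegral_mul_const' _ _ (by simp)).symm
    _ ≤ ∫⁻ x in K, halfSpaceDepth (volume.restrict K) x :=
        lintegral_mono fun x => measure_inter_reflect_div_two_le_halfSpaceDepth K x

end
end

section
/- Let μ and ν be probability measures on ℝⁿ, let X₁, …, X_N (N > n) be independent random points distributed according to μ, and let K_N = conv{X₁,…,X_N}. Then for every t > 0, E_{μ^N}[ν(K_N)] ≤ ν(B_t(μ)) + N·e^{−t}. -/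
open MeasureTheory Real Filter
open scoped ENNReal Pointwise RealInnerProductSpace

noncomputable section

namespace RPAux

variable {n : ℕ}

lemma inner_cont (u : EuclideanSpace ℝ (Fin n)) :
    Continuous fun z : EuclideanSpace ℝ (Fin n) => ⟪u, z⟫ := (innerSL ℝ u).continuous

lemma L_meas (u : EuclideanSpace ℝ (Fin n)) :
    Measurable fun z : EuclideanSpace ℝ (Fin n) => ENNReal.ofReal (Real.exp ⟪u, z⟫) :=
  (ENNReal.continuous_ofReal.comp (Real.continuous_exp.comp (inner_cont u))).measurable

lemma L_ne_zero (μ : Measure (EuclideanSpace ℝ (Fin n))) [IsProbabilityMeasure μ]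
    (u : EuclideanSpace ℝ (Fin n)) :
    (∫⁻ x, ENNReal.ofReal (Real.exp ⟪u, x⟫) ∂μ) ≠ 0 := by
  have : 0 < ∫⁻ x, ENNReal.ofReal (Real.exp ⟪u, x⟫) ∂μ := by
    rw [lintegral_pos_iff_support (L_meas u)]
    have : (Function.support fun x : EuclideanSpace ℝ (Fin n) =>
        ENNReal.ofReal (Real.exp ⟪u, x⟫)) = Set.univ := by
      ext x
      simp [Function.mem_support, ENNReal.ofReal_eq_zero, not_le, Real.exp_pos]
    rw [this]
    simp
  exact this.ne'

lemma chernoff (μ : Measure (EuclideanSpace ℝ (Fin n))) (t c : ℝ)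
    (u : EuclideanSpace ℝ (Fin n))
    (h : (∫⁻ x, ENNReal.ofReal (Real.exp ⟪u, x⟫) ∂μ) = ENNReal.ofReal (Real.exp c)) :
    μ {z | t + c < ⟪u, z⟫} ≤ ENNReal.ofReal (Real.exp (-t)) := by
  have hS : MeasurableSet {z : EuclideanSpace ℝ (Fin n) | t + c < ⟪u, z⟫} :=
    (isOpen_lt continuous_const (inner_cont u)).measurableSet
  calc μ {z | t + c < ⟪u, z⟫}
      = ∫⁻ z, {z : EuclideanSpace ℝ (Fin n) | t + c < ⟪u, z⟫}.indicator 1 z ∂μ :=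
        (lintegral_indicator_one hS).symm
    _ ≤ ∫⁻ z, ENNReal.ofReal (Real.exp (-(t + c))) * ENNReal.ofReal (Real.exp ⟪u, z⟫) ∂μ := by
        refine lintegral_mono fun z => ?_
        by_cases hz : z ∈ {z : EuclideanSpace ℝ (Fin n) | t + c < ⟪u, z⟫}
        · rw [Set.indicator_of_mem hz, ← ENNReal.ofReal_mul (Real.exp_nonneg _), ← Real.exp_add,
            Pi.one_apply]
          refine ENNReal.one_le_ofReal.2 (Real.one_le_exp ?_)
          have : t + c < ⟪u, z⟫ := hz
          linarith
        · rw [Set.indicator_of_notMem hz]; exact zero_le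
    _ = ENNReal.ofReal (Real.exp (-(t + c))) * ∫⁻ z, ENNReal.ofReal (Real.exp ⟪u, z⟫) ∂μ :=
        lintegral_const_mul _ (L_meas u)
    _ = ENNReal.ofReal (Real.exp (-t)) := by
        rw [h, ← ENNReal.ofReal_mul (Real.exp_nonneg _), ← Real.exp_add]
        norm_num

lemma exists_witness (μ : Measure (EuclideanSpace ℝ (Fin n))) [IsProbabilityMeasure μ]
    {t : ℝ} {x : EuclideanSpace ℝ (Fin n)} (hx : x ∉ Bset μ t) :
    ∃ p : EuclideanSpace ℝ (Fin n) × ℝ,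
      (∫⁻ y, ENNReal.ofReal (Real.exp ⟪p.1, y⟫) ∂μ) = ENNReal.ofReal (Real.exp p.2) ∧
      t + p.2 < ⟪p.1, x⟫ := by
  simp only [Bset, Set.mem_setOf_eq, not_le] at hx
  rw [cramer, lt_iSup_iff] at hx
  obtain ⟨u, hu⟩ := hx
  set Lu := ∫⁻ y, ENNReal.ofReal (Real.exp ⟪u, y⟫) ∂μ with hLu
  have h0 : Lu ≠ 0 := L_ne_zero μ u
  have hT : Lu ≠ ⊤ := by
    intro hT
    rw [logLaplace, ← hLu, hT, ENNReal.log_top, EReal.sub_top] at hu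
    exact (not_lt_bot hu)
  have hpos : 0 < Lu.toReal := ENNReal.toReal_pos h0 hT
  refine ⟨(u, Real.log Lu.toReal), ?_, ?_⟩
  · simp only
    rw [← hLu, Real.exp_log hpos]
    exact (ENNReal.ofReal_toReal hT).symm
  · have hlog : logLaplace μ u = ((Real.log Lu.toReal : ℝ) : EReal) := by
      rw [logLaplace, ← hLu, ENNReal.log]
      simp [h0, hT]
    rw [hlog, ← EReal.coe_sub, EReal.coe_lt_coe_iff] at hu
    simp only
    rw [real_inner_comm]
    linarith

end RPAux

open RPAux in
/-- `E_{μ^N}[ν(K_N)] ≤ ν(B_t(μ)) + N e^{−t}`. -/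
theorem expected_measure_of_random_polytope_le (n N : ℕ) (hN : n < N)
    (μ ν : Measure (EuclideanSpace ℝ (Fin n)))
    [IsProbabilityMeasure μ] [IsProbabilityMeasure ν] (t : ℝ) (ht : 0 < t) :
    ∫⁻ ω, ν (convexHull ℝ (Set.range ω)) ∂(Measure.pi fun _ : Fin N => μ) ≤
      ν (Bset μ t) + N * ENNReal.ofReal (Real.exp (-t)) := by
  classical
  set P := Measure.pi fun _ : Fin N => μ with hP
  set A : Set (EuclideanSpace ℝ (Fin n)) := (Bset μ t)ᶜ with hAdef
  rcases Set.eq_empty_or_nonempty A with hAe | hAne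
  · -- A empty: every convex hull is inside Bset
    have hsub : ∀ ω : Fin N → EuclideanSpace ℝ (Fin n),
        convexHull ℝ (Set.range ω) ⊆ Bset μ t := by
      intro ω x _
      by_contra hx
      exact absurd (hAe ▸ hx : x ∈ (∅ : Set _)) (Set.notMem_empty x)
    calc ∫⁻ ω, ν (convexHull ℝ (Set.range ω)) ∂P
        ≤ ∫⁻ _, ν (Bset μ t) ∂P := lintegral_mono fun ω => measure_mono (hsub ω)
      _ = ν (Bset μ t) := by simp
      _ ≤ _ := le_self_add
  · -- choose a witness halfspace for each point of A
    have hchoice : ∀ x : ↥A, ∃ p : EuclideanSpace ℝ (Fin n) × ℝ,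
        (∫⁻ y, ENNReal.ofReal (Real.exp ⟪p.1, y⟫) ∂μ) = ENNReal.ofReal (Real.exp p.2) ∧
        t + p.2 < ⟪p.1, (x : EuclideanSpace ℝ (Fin n))⟫ :=
      fun x => exists_witness μ x.2
    choose p hp1 hp2 using hchoice
    set V : ↥A → Set (EuclideanSpace ℝ (Fin n)) :=
      fun x => {z | t + (p x).2 < ⟪(p x).1, z⟫} with hVdef
    have hVopen : ∀ x, IsOpen (V x) := fun x =>
      isOpen_lt continuous_const (inner_cont (p x).1)
    obtain ⟨T, hTc, hTU⟩ := TopologicalSpace.isOpen_iUnion_countable V hVopen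
    have hAsub : A ⊆ ⋃ x, V x := fun x hx => Set.mem_iUnion.2 ⟨⟨x, hx⟩, hp2 ⟨x, hx⟩⟩
    have hTne : T.Nonempty := by
      rcases hAne with ⟨a, ha⟩
      by_contra hTe
      rw [Set.not_nonempty_iff_eq_empty] at hTe
      have := hAsub ha
      rw [← hTU, hTe] at this
      simpa using this
    obtain ⟨g, hg⟩ := hTc.exists_eq_range hTne
    set W : ℕ → Set (EuclideanSpace ℝ (Fin n)) := fun k => V (g k) with hWdef
    have hWopen : ∀ k, IsOpen (W k) := fun k => hVopen (g k)
    have hWmeas : ∀ k, MeasurableSet (W k) := fun k => (hWopen k).measurableSet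
    have hAW : A ⊆ ⋃ k, W k := by
      intro x hx
      have h1 := hAsub hx
      rw [← hTU, hg] at h1
      simpa [Set.biUnion_range] using h1
    set D : ℕ → Set (EuclideanSpace ℝ (Fin n)) := disjointed W with hDdef
    have hDmeas : ∀ k, MeasurableSet (D k) := MeasurableSet.disjointed hWmeas
    have hDW : ∀ k, D k ⊆ W k := disjointed_subset W
    have hDU : (⋃ k, D k) = ⋃ k, W k := iUnion_disjointed
    set G : ℕ → Set (Fin N → EuclideanSpace ℝ (Fin n)) :=
      fun k => ⋃ i : Fin N, (fun ω : Fin N → EuclideanSpace ℝ (Fin n) => ω i) ⁻¹' W k with hGdef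
    have hGmeas : ∀ k, MeasurableSet (G k) := fun k =>
      MeasurableSet.iUnion fun i => (measurable_pi_apply i) (hWmeas k)
    -- pointwise key inequality
    have key : ∀ ω : Fin N → EuclideanSpace ℝ (Fin n),
        ν (convexHull ℝ (Set.range ω)) ≤
          ν (Bset μ t) + ∑' k, ν (D k) * (G k).indicator 1 ω := by
      intro ω
      have h1 : convexHull ℝ (Set.range ω) ⊆
          Bset μ t ∪ ⋃ k, (convexHull ℝ (Set.range ω) ∩ D k) := by
        intro x hx
        by_cases hxB : x ∈ Bset μ t
        · exact Or.inl hxB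
        · have hxA : x ∈ A := hxB
          have h2 := hAW hxA
          rw [← hDU] at h2
          obtain ⟨k, hk⟩ := Set.mem_iUnion.1 h2
          exact Or.inr (Set.mem_iUnion.2 ⟨k, hx, hk⟩)
      have hterm : ∀ k, ν (convexHull ℝ (Set.range ω) ∩ D k) ≤
          ν (D k) * (G k).indicator 1 ω := by
        intro k
        by_cases hωG : ω ∈ G k
        · rw [Set.indicator_of_mem hωG, Pi.one_apply, mul_one]
          exact measure_mono Set.inter_subset_right
        · have hempty : convexHull ℝ (Set.range ω) ∩ D k = ∅ := by
            rw [Set.eq_empty_iff_forall_notMem]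
            rintro x ⟨hxc, hxD⟩
            have hxW : x ∈ W k := hDW k hxD
            have hall : ∀ i, ⟪(p (g k)).1, ω i⟫ ≤ t + (p (g k)).2 := by
              intro i
              by_contra hcon
              exact hωG (Set.mem_iUnion.2 ⟨i, not_le.1 hcon⟩)
            have hconv : convexHull ℝ (Set.range ω) ⊆
                {z | ⟪(p (g k)).1, z⟫ ≤ t + (p (g k)).2} := by
              refine convexHull_min ?_ (convex_halfSpace_le
                ⟨fun a b => inner_add_right _ _ _, fun r a => real_inner_smul_right _ _ _⟩ _)
              rintro _ ⟨i, rfl⟩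
              exact hall i
            have h3 : ⟪(p (g k)).1, x⟫ ≤ t + (p (g k)).2 := hconv hxc
            have h4 : t + (p (g k)).2 < ⟪(p (g k)).1, x⟫ := hxW
            linarith
          rw [hempty]
          simp
      calc ν (convexHull ℝ (Set.range ω))
          ≤ ν (Bset μ t ∪ ⋃ k, (convexHull ℝ (Set.range ω) ∩ D k)) := measure_mono h1
        _ ≤ ν (Bset μ t) + ν (⋃ k, (convexHull ℝ (Set.range ω) ∩ D k)) := measure_union_le _ _
        _ ≤ ν (Bset μ t) + ∑' k, ν (convexHull ℝ (Set.range ω) ∩ D k) :=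
            add_le_add_right (measure_iUnion_le _) _
        _ ≤ ν (Bset μ t) + ∑' k, ν (D k) * (G k).indicator 1 ω :=
            add_le_add_right (ENNReal.tsum_le_tsum hterm) _
    -- marginal bound
    have hmarg : ∀ (k : ℕ) (i : Fin N),
        P ((fun ω : Fin N → EuclideanSpace ℝ (Fin n) => ω i) ⁻¹' W k) = μ (W k) := by
      intro k i
      have : (fun ω : Fin N → EuclideanSpace ℝ (Fin n) => ω i) ⁻¹' W k =
          Set.pi Set.univ (Function.update (fun _ : Fin N => Set.univ) i (W k)) := by
        exact Set.eval_preimage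
      rw [hP, this, Measure.pi_pi]
      rw [Finset.prod_eq_single i]
      · simp
      · intro j _ hj
        simp [Function.update_of_ne hj]
      · simp
    have hGbound : ∀ k, P (G k) ≤ N * ENNReal.ofReal (Real.exp (-t)) := by
      intro k
      calc P (G k) ≤ ∑' i : Fin N,
            P ((fun ω : Fin N → EuclideanSpace ℝ (Fin n) => ω i) ⁻¹' W k) :=
            measure_iUnion_le _
        _ = ∑' _ : Fin N, μ (W k) := by simp_rw [hmarg]
        _ = N * μ (W k) := by
            rw [tsum_fintype]
            simp [Finset.card_univ, nsmul_eq_mul]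
        _ ≤ N * ENNReal.ofReal (Real.exp (-t)) := by
            gcongr
            exact chernoff μ t (p (g k)).2 (p (g k)).1 (hp1 (g k))
    calc ∫⁻ ω, ν (convexHull ℝ (Set.range ω)) ∂P
        ≤ ∫⁻ ω, (ν (Bset μ t) + ∑' k, ν (D k) * (G k).indicator 1 ω) ∂P :=
          lintegral_mono key
      _ = ν (Bset μ t) + ∑' k, ν (D k) * P (G k) := by
          rw [lintegral_add_left measurable_const]
          congr 1
          · simp
          · rw [lintegral_tsum (f := fun k (ω : Fin N → EuclideanSpace ℝ (Fin n)) =>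
                ν (D k) * (G k).indicator 1 ω) fun k => (measurable_const.mul
                ((measurable_const.indicator (hGmeas k)))).aemeasurable]
            congr 1
            ext k
            exact (lintegral_const_mul (ν (D k))
              (measurable_const.indicator (hGmeas k))).trans
              (congrArg (fun q => ν (D k) * q) (lintegral_indicator_one (hGmeas k)))
      _ ≤ ν (Bset μ t) + ∑' k, ν (D k) * (N * ENNReal.ofReal (Real.exp (-t))) := by
          gcongr with k
          exact hGbound k
      _ = ν (Bset μ t) + (∑' k, ν (D k)) * (N * ENNReal.ofReal (Real.exp (-t))) := by
          rw [ENNReal.tsum_mul_right]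
      _ ≤ ν (Bset μ t) + 1 * (N * ENNReal.ofReal (Real.exp (-t))) := by
          gcongr
          rw [← measure_iUnion (disjoint_disjointed W) hDmeas]
          exact prob_le_one
      _ = ν (Bset μ t) + N * ENNReal.ofReal (Real.exp (-t)) := by rw [one_mul]

end
end

section
/- Let μ be a probability measure on ℝⁿ, let X₁, …, X_N be independent random points distributed according to μ, and let K_N = conv{X₁,…,X_N}. Then for every x ∈ ℝⁿ, the probability that x ∈ K_N satisfies μ^N(x ∈ K_N) ≤ N·φ_μ(x), where φ_μ is the half-space depth of μ. -/
open MeasureTheory Real Filter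
open scoped ENNReal Pointwise RealInnerProductSpace

noncomputable section

/-!
If `x` lies in the convex hull of `X₁, …, X_N` and `H ∋ x` is a closed half-space, some `Xᵢ`
lies in `H`: otherwise all the points, hence their convex hull, lie in the convex complement
of `H`. The union bound gives `μ^N(x ∈ K_N) ≤ N μ(H)`, and one takes the infimum over `H`.
-/

lemma exists_apply_mem_of_mem_convexHull_range {E ι : Type*} [AddCommGroup E] [Module ℝ E]
    {H : Set E} (hH : Convex ℝ Hᶜ) {x : E} (hx : x ∈ H) {ω : ι → E}
    (hω : x ∈ convexHull ℝ (Set.range ω)) : ∃ i, ω i ∈ H := by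
  by_contra! hω_out
  exact convexHull_min (Set.range_subset_iff.2 hω_out) hH hω hx

lemma pi_setOf_mem_convexHull_range_le {E ι : Type*} [AddCommGroup E] [Module ℝ E]
    [MeasurableSpace E] [Fintype ι] (μ : ι → Measure E) [∀ i, IsProbabilityMeasure (μ i)]
    {H : Set E} (hH_meas : MeasurableSet H) (hH : Convex ℝ Hᶜ) {x : E} (hx : x ∈ H) :
    Measure.pi μ {ω | x ∈ convexHull ℝ (Set.range ω)} ≤ ∑ i, μ i H :=
  calc Measure.pi μ {ω | x ∈ convexHull ℝ (Set.range ω)}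
      ≤ Measure.pi μ (⋃ i, Function.eval i ⁻¹' H) := measure_mono fun _ hω ↦
        Set.mem_iUnion.2 (exists_apply_mem_of_mem_convexHull_range hH hx hω)
    _ ≤ ∑ i, Measure.pi μ (Function.eval i ⁻¹' H) := measure_iUnion_fintype_le _ _
    _ = ∑ i, μ i H := by
        simp only [(measurePreserving_eval μ _).measure_preimage hH_meas.nullMeasurableSet]

lemma convex_compl_setOf_le_inner {E : Type*} [NormedAddCommGroup E] [InnerProductSpace ℝ E]
    (v : E) (a : ℝ) : Convex ℝ {z : E | a ≤ ⟪v, z⟫}ᶜ := by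
  rw [show {z : E | a ≤ ⟪v, z⟫}ᶜ = innerₛₗ ℝ v ⁻¹' Set.Iio a by ext; simp]
  exact (convex_Iio a).linear_preimage _

/-- `μ^N(x ∈ K_N) ≤ N·φ_μ(x)`. -/
theorem prob_mem_random_polytope_le (n N : ℕ) (μ : Measure (EuclideanSpace ℝ (Fin n)))
    [IsProbabilityMeasure μ] (x : EuclideanSpace ℝ (Fin n)) :
    (Measure.pi fun _ : Fin N => μ) {ω | x ∈ convexHull ℝ (Set.range ω)} ≤
      N * halfSpaceDepth μ x := by
  rcases eq_or_ne N 0 with rfl | hN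
  · simp  -- `K_0 = ∅`
  simp only [halfSpaceDepth,
    ENNReal.mul_iInf_of_ne (Nat.cast_ne_zero.2 hN) (ENNReal.natCast_ne_top N)]
  refine le_iInf₂ ?_
  rintro _ ⟨v, a, -, rfl, hx⟩
  calc (Measure.pi fun _ : Fin N => μ) {ω | x ∈ convexHull ℝ (Set.range ω)}
      ≤ ∑ _i : Fin N, μ {z | a ≤ ⟪v, z⟫} :=
        pi_setOf_mem_convexHull_range_le _ (measurableSet_le measurable_const (by fun_prop))
          (convex_compl_setOf_le_inner v a) hx
    _ = N * μ {z | a ≤ ⟪v, z⟫} := by simp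

end
end
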